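/- Let F and G be two finite decreasing n-opposite filtrations on a vector space A (Gr_F^p Gr_G^q A = 0 for p+q ≠ n). Set A^{p,q} = F^p(A) ∩ G^q(A) for p+q = n. Then A = ⊕_{p+q=n} A^{p,q}, and moreover F^p(A) = ⊕_{p'≥p} A^{p',n−p'} and G^q(A) = ⊕_{q'≥q} A^{n−q',q'}. -/

import Mathlib

/-!
Everything happens in a modular lattice.  Since `F p ⊓ G q` vanishes once `p + q` is large,
descending induction on `p + q` using opposedness gives `F p ⊓ G q = ⊥` for all `p + q > n`.
Since `G q = ⊤` for small `q`, descending induction on `q` gives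
`F p ≤ F (p + 1) ⊔ A^{p, n - p}`, and iterating this exhausts `F p` by the pieces with
`p' ≥ p`.  Independence is the modular law:
`F p ⊓ (F (p + 1) ⊔ G (n - p + 1)) = F (p + 1) ⊔ (F p ⊓ G (n - p + 1)) = F (p + 1)`,
which meets `G (n - p)` in `⊥`.
-/

/-- The lattice form of `Gr_F^p Gr_G^q = 0` for `p + q ≠ n`. -/
def IsOpposite {α : Type*} [Lattice α] (n : ℤ) (F G : ℤ → α) : Prop :=
  ∀ p q : ℤ, p + q ≠ n → F p ⊓ G q ≤ (F (p + 1) ⊓ G q) ⊔ (F p ⊓ G (q + 1))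

namespace IsOpposite

section Lattice

variable {α : Type*} [Lattice α] {n : ℤ} {F G : ℤ → α}

theorem symm (h : IsOpposite n F G) : IsOpposite n G F := fun p q hpq => by
  simpa only [inf_comm, sup_comm] using h q p (by omega)

theorem inf_le_sup_inf (h : IsOpposite n F G) {p q : ℤ} (hq : q ≤ n - p) :
    F p ⊓ G q ≤ F (p + 1) ⊔ (F p ⊓ G (n - p)) := by
  induction q, hq using Int.leInductionDown with
  | base => exact le_sup_right
  | pred q hq ih =>
    calc F p ⊓ G (q - 1) ≤ (F (p + 1) ⊓ G (q - 1)) ⊔ (F p ⊓ G q) := by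
          simpa using h p (q - 1) (by omega)
      _ ≤ F (p + 1) ⊔ (F p ⊓ G (n - p)) := sup_le (inf_le_left.trans le_sup_left) ih

theorem le_sup_inf [OrderTop α] (h : IsOpposite n F G) (hG : Antitone G) {a : ℤ}
    (ha : G a = ⊤) (p : ℤ) :
    F p ≤ F (p + 1) ⊔ (F p ⊓ G (n - p)) := by
  have hGtop : G (min a (n - p)) = ⊤ := top_le_iff.mp (ha ▸ hG (min_le_left _ _))
  simpa [hGtop] using h.inf_le_sup_inf (min_le_right a (n - p))

theorem inf_eq_bot_of_lt_add [OrderBot α] (h : IsOpposite n F G) (hF : Antitone F) (hG : Antitone G)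
    {b c : ℤ} (hb : F b = ⊥) (hc : G c = ⊥) {p q : ℤ} (hpq : n < p + q) : F p ⊓ G q = ⊥ := by
  have large : ∀ p q, b + c ≤ p + q → F p ⊓ G q = ⊥ := fun p q hpq => by
    rcases le_or_gt b p with hp | hp
    · exact le_bot_iff.mp (inf_le_left.trans (hb ▸ hF hp))
    · exact le_bot_iff.mp (inf_le_right.trans (hc ▸ hG (by omega)))
  rcases le_or_gt (b + c) (p + q) with hs | hs
  · exact large p q hs
  suffices ∀ s ≤ b + c, n < s → ∀ p q, p + q = s → F p ⊓ G q = ⊥ from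
    this _ hs.le hpq p q rfl
  intro s hs
  induction s, hs using Int.leInductionDown with
  | base => exact fun _ p q hpq => large p q hpq.ge
  | pred s hs ih =>
    intro hns p q hpq
    refine le_bot_iff.mp ((h p q (by omega)).trans (sup_le ?_ ?_))
    · exact (ih (by omega) (p + 1) q (by omega)).le
    · exact (ih (by omega) p (q + 1) (by omega)).le

end Lattice

section CompleteLattice

variable {α : Type*} [CompleteLattice α] {n : ℤ} {F G : ℤ → α}

theorem eq_iSup_inf (h : IsOpposite n F G) (hF : Antitone F) (hG : Antitone G) {a b : ℤ}
    (ha : G a = ⊤) (hb : F b = ⊥) (p : ℤ) :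
    F p = ⨆ p' : ℤ, ⨆ _ : p ≤ p', F p' ⊓ G (n - p') := by
  refine le_antisymm ?_ (iSup₂_le fun p' hp' => inf_le_left.trans (hF hp'))
  rcases le_or_gt b p with hp | hp
  · exact (hb ▸ hF hp).trans bot_le
  replace hp := hp.le
  induction p, hp using Int.leInductionDown with
  | base => exact hb ▸ bot_le
  | pred p _ ih =>
    calc F (p - 1) ≤ F p ⊔ (F (p - 1) ⊓ G (n - (p - 1))) := by
          simpa using h.le_sup_inf hG ha (p - 1)
      _ ≤ ⨆ p' : ℤ, ⨆ _ : p - 1 ≤ p', F p' ⊓ G (n - p') := by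
        refine sup_le (ih.trans (iSup₂_mono' fun p' hp' => ⟨p', by omega, le_rfl⟩)) ?_
        exact le_iSup₂_of_le (p - 1) le_rfl le_rfl

theorem iSup_eq_top (h : IsOpposite n F G) (hF : Antitone F) (hG : Antitone G) {a a' b : ℤ}
    (ha : G a = ⊤) (ha' : F a' = ⊤) (hb : F b = ⊥) :
    ⨆ p, F p ⊓ G (n - p) = ⊤ := by
  rw [eq_top_iff, ← ha', h.eq_iSup_inf hF hG ha hb a']
  exact iSup₂_le fun p _ => le_iSup (fun p => F p ⊓ G (n - p)) p

theorem iSupIndep [IsModularLattice α] (h : IsOpposite n F G) (hF : Antitone F)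
    (hG : Antitone G) {b c : ℤ} (hb : F b = ⊥) (hc : G c = ⊥) :
    iSupIndep fun p => F p ⊓ G (n - p) := by
  refine iSupIndep_def.mpr fun p => disjoint_iff.mpr (le_bot_iff.mp ?_)
  have others : ⨆ (j) (_ : j ≠ p), F j ⊓ G (n - j) ≤ F (p + 1) ⊔ G (n - p + 1) :=
    iSup₂_le fun j hj => by
      rcases lt_or_gt_of_ne hj with hjp | hjp
      · exact inf_le_right.trans ((hG (by omega)).trans le_sup_right)
      · exact inf_le_left.trans ((hF (by omega)).trans le_sup_left)
  calc F p ⊓ G (n - p) ⊓ ⨆ (j) (_ : j ≠ p), F j ⊓ G (n - j)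
      ≤ G (n - p) ⊓ (F p ⊓ (F (p + 1) ⊔ G (n - p + 1))) := by
        rw [inf_comm (F p), inf_assoc]
        exact inf_le_inf_left _ (inf_le_inf_left _ others)
    _ = G (n - p) ⊓ F (p + 1) := by
        rw [inf_comm (F p), sup_inf_assoc_of_le _ (hF (Int.le_add_one le_rfl)), inf_comm _ (F p),
          h.inf_eq_bot_of_lt_add hF hG hb hc (by omega), sup_bot_eq]
    _ = ⊥ := by rw [inf_comm, h.inf_eq_bot_of_lt_add hF hG hb hc (by omega)]

end CompleteLattice

end IsOpposite

theorem stmt7_general (K A : Type*) [Field K] [AddCommGroup A] [Module K A]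
    (F G : ℤ → Submodule K A) (hF : Antitone F) (hG : Antitone G)
    (hFtop : ∃ a, F a = ⊤) (hFbot : ∃ a, F a = ⊥)
    (hGtop : ∃ a, G a = ⊤) (hGbot : ∃ a, G a = ⊥) (n : ℤ)
    (hopp : ∀ p q : ℤ, p + q ≠ n →
      F p ⊓ G q ≤ (F (p + 1) ⊓ G q) ⊔ (F p ⊓ G (q + 1))) :
    DirectSum.IsInternal (fun p : ℤ => F p ⊓ G (n - p)) ∧
    (∀ p : ℤ, F p = ⨆ p' : ℤ, ⨆ _ : p ≤ p', F p' ⊓ G (n - p')) ∧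
    (∀ q : ℤ, G q = ⨆ q' : ℤ, ⨆ _ : q ≤ q', F (n - q') ⊓ G q') := by
  obtain ⟨aF, haF⟩ := hFtop
  obtain ⟨bF, hbF⟩ := hFbot
  obtain ⟨aG, haG⟩ := hGtop
  obtain ⟨bG, hbG⟩ := hGbot
  have h : IsOpposite n F G := hopp
  refine ⟨?_, h.eq_iSup_inf hF hG haG hbF, fun q => ?_⟩
  · rw [DirectSum.isInternal_submodule_iff_iSupIndep_and_iSup_eq_top]
    exact ⟨h.iSupIndep hF hG hbF hbG, h.iSup_eq_top hF hG haG haF hbF⟩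
  · rw [h.symm.eq_iSup_inf hG hF haF hbG q]
    simp only [inf_comm]

/-- Let `F` and `G` be finite decreasing `n`-opposite filtrations on a finite-dimensional
vector space `A` and set `A^{p,q} = F^p(A) ∩ G^q(A)` for `p + q = n`.  Then
`A = ⊕_{p+q=n} A^{p,q}`, `F^p(A) = ⊕_{p'≥p} A^{p',n-p'}` and
`G^q(A) = ⊕_{q'≥q} A^{n-q',q'}`. -/
theorem stmt7 (K A : Type*) [Field K] [AddCommGroup A] [Module K A]
    [FiniteDimensional K A]
    (F G : ℤ → Submodule K A) (hF : Antitone F) (hG : Antitone G)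
    (hFtop : ∃ a, F a = ⊤) (hFbot : ∃ a, F a = ⊥)
    (hGtop : ∃ a, G a = ⊤) (hGbot : ∃ a, G a = ⊥) (n : ℤ)
    (hopp : ∀ p q : ℤ, p + q ≠ n →
      F p ⊓ G q ≤ (F (p + 1) ⊓ G q) ⊔ (F p ⊓ G (q + 1))) :
    DirectSum.IsInternal (fun p : ℤ => F p ⊓ G (n - p)) ∧
    (∀ p : ℤ, F p = ⨆ p' : ℤ, ⨆ _ : p ≤ p', F p' ⊓ G (n - p')) ∧
    (∀ q : ℤ, G q = ⨆ q' : ℤ, ⨆ _ : q ≤ q', F (n - q') ⊓ G q') :=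
  stmt7_general K A F G hF hG hFtop hFbot hGtop hGbot n hopp
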